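/- Suppose ω ∈ (0, 1) satisfies the error bound ω · dist(z, S) ≤ dist(z, M) for all z with ‖z‖₁ ≤ r̄, where S := {x ∈ M : ‖x‖₁ = r̄}. Then the radius sequence (r_k) generated by the BP-MAP algorithm satisfies r̄ − r_{k+1} ≤ (1 − ω/√n)(r̄ − r_k) for every k ≥ 0; in particular, r̄ − r_k ≤ (1 − ω/√n)^k · r̄ for every k, so (r_k) converges to r̄ linearly with rate no worse than 1 − ω/√n. -/

import Mathlib

open Filter Topology

noncomputable def norm1 {n : ℕ} (x : EuclideanSpace ℝ (Fin n)) : ℝ := ∑ i, |x i|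

lemma norm1_nonneg' {n : ℕ} (x : EuclideanSpace ℝ (Fin n)) : 0 ≤ norm1 x :=
  Finset.sum_nonneg fun _ _ => abs_nonneg _

lemma norm_le_norm1 {n : ℕ} (x : EuclideanSpace ℝ (Fin n)) : ‖x‖ ≤ norm1 x := by
  rw [EuclideanSpace.norm_eq, show norm1 x = Real.sqrt ((norm1 x)^2)
    from (Real.sqrt_sq (norm1_nonneg' x)).symm]
  apply Real.sqrt_le_sqrt
  simpa [norm1, Real.norm_eq_abs, sq_abs] using
    Finset.sum_sq_le_sq_sum_of_nonneg (f := fun i => |x i|) (s := Finset.univ)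
      (fun i _ => abs_nonneg _)

lemma norm1_le_sqrt_mul_norm {n : ℕ} (x : EuclideanSpace ℝ (Fin n)) :
    norm1 x ≤ Real.sqrt n * ‖x‖ := by
  rw [EuclideanSpace.norm_eq, ← Real.sqrt_mul (Nat.cast_nonneg n),
    show norm1 x = Real.sqrt ((norm1 x)^2) from (Real.sqrt_sq (norm1_nonneg' x)).symm]
  apply Real.sqrt_le_sqrt
  have := sq_sum_le_card_mul_sum_sq (s := (Finset.univ : Finset (Fin n)))
    (f := fun i => |x i|)
  simpa [norm1, Real.norm_eq_abs, sq_abs] using this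

lemma norm1_continuous {n : ℕ} : Continuous (norm1 (n := n)) :=
  continuous_finset_sum _ fun i _ => (EuclideanSpace.proj (𝕜 := ℝ) i).continuous.abs

lemma norm1_triangle' {n : ℕ} (a b : EuclideanSpace ℝ (Fin n)) :
    norm1 a ≤ norm1 b + norm1 (a - b) := by
  unfold norm1
  rw [← Finset.sum_add_distrib]
  apply Finset.sum_le_sum
  intro i _
  have h : (a - b) i = a i - b i := rfl
  rw [h]
  have := abs_sub_abs_le_abs_sub (a i) (b i)
  linarith

/-- Under the error bound with constant ω ∈ (0,1), the radii satisfy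
r̄ − r_{k+1} ≤ (1 − ω/√n)(r̄ − r_k); in particular r̄ − r_k ≤ (1 − ω/√n)^k · r̄. -/
theorem bpmap_radii_linear_rate {n m : ℕ} (hn : 1 ≤ n)
    (A : Matrix (Fin m) (Fin n) ℝ) (b : Fin m → ℝ)
    (M : Set (EuclideanSpace ℝ (Fin n)))
    (hM : M = {x : EuclideanSpace ℝ (Fin n) | A.mulVec (WithLp.ofLp x) = b})
    (hMne : M.Nonempty)
    (rbar : ℝ) (hrbar : rbar = sInf (norm1 '' M))
    (r : ℕ → ℝ) (z x : ℕ → EuclideanSpace ℝ (Fin n))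
    (hr0 : r 0 = 0) (hz0 : z 0 = 0)
    (hxM : ∀ k, x k ∈ M)
    (hzB : ∀ k, norm1 (z k) ≤ r k)
    (hbap : ∀ k, ∀ y ∈ M, ∀ w : EuclideanSpace ℝ (Fin n),
      norm1 w ≤ r k → dist (z k) (x k) ≤ dist w y)
    (hrrec : ∀ k, r (k + 1) = r k + dist (z k) (x k))
    (S : Set (EuclideanSpace ℝ (Fin n)))
    (hS : S = {u ∈ M | norm1 u = rbar})
    (ω : ℝ) (hω0 : 0 < ω) (hω1 : ω < 1)
    (hEB : ∀ u : EuclideanSpace ℝ (Fin n), norm1 u ≤ rbar →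
      ω * Metric.infDist u S ≤ Metric.infDist u M) :
    (∀ k, rbar - r (k + 1) ≤ (1 - ω / Real.sqrt n) * (rbar - r k)) ∧
      (∀ k, rbar - r k ≤ (1 - ω / Real.sqrt n) ^ k * rbar) := by
  have hsqn1 : (1:ℝ) ≤ Real.sqrt n := by
    rw [show (1:ℝ) = Real.sqrt 1 from (Real.sqrt_one).symm]
    exact Real.sqrt_le_sqrt (by exact_mod_cast hn)
  have hsqn0 : (0:ℝ) < Real.sqrt n := lt_of_lt_of_le one_pos hsqn1
  -- M is closed
  have hMclosed : IsClosed M := by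
    rw [hM]
    have hcont : Continuous fun x : EuclideanSpace ℝ (Fin n) => A.mulVec (WithLp.ofLp x) := by
      apply continuous_pi
      intro j
      simp only [Matrix.mulVec, dotProduct]
      exact continuous_finset_sum _ fun i _ =>
        continuous_const.mul (EuclideanSpace.proj (𝕜 := ℝ) i).continuous
    exact isClosed_singleton.preimage hcont
  -- existence of a minimizer: S is nonempty
  obtain ⟨x0, hx0⟩ := hMne
  set R := norm1 x0 with hR
  set K : Set (EuclideanSpace ℝ (Fin n)) := {u ∈ M | norm1 u ≤ R} with hK
  have hKne : K.Nonempty := ⟨x0, hx0, le_refl _⟩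
  have hKclosed : IsClosed K :=
    hMclosed.inter (isClosed_le norm1_continuous continuous_const)
  have hKsub : K ⊆ Metric.closedBall 0 R := by
    intro u hu
    rw [Metric.mem_closedBall, dist_zero_right]
    exact (norm_le_norm1 u).trans hu.2
  have hKcpt : IsCompact K :=
    (isCompact_closedBall (0 : EuclideanSpace ℝ (Fin n)) R).of_isClosed_subset
      hKclosed hKsub
  obtain ⟨xb, hxbK, hxbmin⟩ := hKcpt.exists_isMinOn hKne norm1_continuous.continuousOn
  have hbdd : BddBelow (norm1 '' M) := ⟨0, by rintro _ ⟨u, _, rfl⟩; exact norm1_nonneg' u⟩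
  have hlb : ∀ y ∈ M, norm1 xb ≤ norm1 y := by
    intro y hy
    by_cases hyR : norm1 y ≤ R
    · exact hxbmin ⟨hy, hyR⟩
    · exact le_trans (hxbmin ⟨hx0, le_refl _⟩) (le_of_not_ge hyR)
  have hxbval : norm1 xb = rbar := by
    rw [hrbar]
    refine le_antisymm (le_csInf ⟨norm1 x0, ⟨x0, hx0, rfl⟩⟩ ?_)
      (csInf_le hbdd ⟨xb, hxbK.1, rfl⟩)
    rintro _ ⟨u, hu, rfl⟩; exact hlb u hu
  have hSne : S.Nonempty := ⟨xb, by rw [hS]; exact ⟨hxbK.1, hxbval⟩⟩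
  -- key inequality
  have key : ∀ k, (ω / Real.sqrt n) * (rbar - r k) ≤ dist (z k) (x k) := by
    intro k
    by_cases hk : r k ≤ rbar
    · -- error bound case
      have hz1 : norm1 (z k) ≤ rbar := le_trans (hzB k) hk
      have h1 : ω * Metric.infDist (z k) S ≤ Metric.infDist (z k) M := hEB _ hz1
      have h2 : Metric.infDist (z k) M ≤ dist (z k) (x k) :=
        Metric.infDist_le_dist_of_mem (hxM k)
      have h3 : (rbar - r k) / Real.sqrt n ≤ Metric.infDist (z k) S := by
        by_contra hcon
        push_neg at hcon
        obtain ⟨s, hs, hds⟩ := (Metric.infDist_lt_iff hSne).mp hcon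
        suffices hsuff : (rbar - r k) / Real.sqrt n ≤ dist (z k) s by linarith
        rw [hS] at hs
        have hnorm : rbar ≤ norm1 (z k) + Real.sqrt n * dist (z k) s := by
          have t1 := norm1_triangle' s (z k)
          have t2 : norm1 (s - z k) ≤ Real.sqrt n * ‖s - z k‖ := norm1_le_sqrt_mul_norm _
          have t3 : dist (z k) s = ‖s - z k‖ := by rw [dist_comm, dist_eq_norm]
          rw [t3]; rw [hs.2] at t1; linarith
        have := hzB k
        rw [div_le_iff₀ hsqn0]
        have hd0 : 0 ≤ dist (z k) s := dist_nonneg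
        nlinarith
      calc (ω / Real.sqrt n) * (rbar - r k) = ω * ((rbar - r k) / Real.sqrt n) := by ring
        _ ≤ ω * Metric.infDist (z k) S := by
            exact mul_le_mul_of_nonneg_left h3 hω0.le
        _ ≤ dist (z k) (x k) := le_trans h1 h2
    · -- trivial case
      have : (ω / Real.sqrt n) * (rbar - r k) ≤ 0 := by
        apply mul_nonpos_of_nonneg_of_nonpos
        · positivity
        · linarith [le_of_not_ge hk]
      exact this.trans dist_nonneg
  have main : ∀ k, rbar - r (k + 1) ≤ (1 - ω / Real.sqrt n) * (rbar - r k) := by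
    intro k
    have hkey := key k
    rw [hrrec k]
    have hring : (1 - ω / Real.sqrt n) * (rbar - r k)
        = (rbar - r k) - (ω / Real.sqrt n) * (rbar - r k) := by ring
    linarith
  refine ⟨main, ?_⟩
  have hq0 : 0 ≤ 1 - ω / Real.sqrt n := by
    have : ω / Real.sqrt n ≤ ω := div_le_self hω0.le hsqn1
    linarith
  intro k
  induction k with
  | zero => simp [hr0]
  | succ k ih =>
    calc rbar - r (k + 1) ≤ (1 - ω / Real.sqrt n) * (rbar - r k) := main k
      _ ≤ (1 - ω / Real.sqrt n) * ((1 - ω / Real.sqrt n) ^ k * rbar) :=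
          mul_le_mul_of_nonneg_left ih hq0
      _ = (1 - ω / Real.sqrt n) ^ (k + 1) * rbar := by ring
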